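/- Let R be a GCD domain (or UFD), and let M = A · N be matrices over R with M of size m × n, A of size m × k, N of size k × n, and n ≤ min(m, k). Then the gcd of all n × n minors of N (taken over all row selections) divides the gcd of all n × n minors of M. -/

import Mathlib

open scoped Classical

/-- The gcd of maximal minors of `N` divides the minor given by any row-selection
function `r : Fin n → Fin k` (not necessarily strictly monotone). -/
lemma gcd_minors_dvd_det_submatrix {R : Type*} [CommRing R] [IsDomain R]
    [NormalizedGCDMonoid R] {n k : ℕ}
    (N : Matrix (Fin k) (Fin n) R) (r : Fin n → Fin k) :
    (Finset.univ.gcd fun g : {g : Fin n → Fin k // StrictMono g} =>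
        (N.submatrix g.1 id).det) ∣ (N.submatrix r id).det := by
  by_cases hr : Function.Injective r
  · -- sort `r` into a strictly monotone map composed with a permutation
    set s : Finset (Fin k) := Finset.univ.image r with hs_def
    have hs : s.card = n := by
      rw [hs_def, Finset.card_image_of_injective _ hr, Finset.card_univ,
        Fintype.card_fin]
    set e := s.orderIsoOfFin hs with he
    set g : Fin n → Fin k := fun i => (e i : Fin k) with hg_def
    have hg : StrictMono g := fun a b hab => e.strictMono hab
    have hmem : ∀ i, r i ∈ s := fun i => Finset.mem_image_of_mem r (Finset.mem_univ i)
    set σ' : Fin n → Fin n := fun i => e.symm ⟨r i, hmem i⟩ with hσ'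
    have hσinj : Function.Injective σ' := by
      intro a b hab
      apply hr
      have := congrArg (fun x => (e x : Fin k)) hab
      simpa [hσ'] using this
    have hσbij : Function.Bijective σ' := Finite.injective_iff_bijective.mp hσinj
    set σ : Equiv.Perm (Fin n) := Equiv.ofBijective σ' hσbij with hσdef
    have hcomp : g ∘ σ = r := by
      funext i
      have : e (σ' i) = ⟨r i, hmem i⟩ := e.apply_symm_apply _
      simp [hg_def, hσdef, Equiv.ofBijective_apply, this]
    have hsub : N.submatrix r id = (N.submatrix g id).submatrix σ id := by
      rw [Matrix.submatrix_submatrix]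
      simp [hcomp]
    rw [hsub, Matrix.det_permute]
    have hdvd : (Finset.univ.gcd fun g : {g : Fin n → Fin k // StrictMono g} =>
        (N.submatrix g.1 id).det) ∣ (N.submatrix g id).det :=
      Finset.gcd_dvd (Finset.mem_univ (⟨g, hg⟩ : {g : Fin n → Fin k // StrictMono g}))
    exact hdvd.mul_left _
  · -- two equal rows, determinant is zero
    rw [Function.not_injective_iff] at hr
    obtain ⟨a, b, hab, hne⟩ := hr
    have : (N.submatrix r id).det = 0 := by
      apply Matrix.det_zero_of_row_eq hne
      funext j
      simp [Matrix.submatrix_apply, hab]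
    rw [this]
    exact dvd_zero _

/-- If `M = A * N` over a GCD domain, the gcd of all maximal `n × n` minors of `N`
divides the gcd of all maximal `n × n` minors of `M`. -/
theorem gcd_minors_dvd_gcd_minors {R : Type*} [CommRing R] [IsDomain R]
    [NormalizedGCDMonoid R] {m n k : ℕ} (hnm : n ≤ m) (hnk : n ≤ k)
    (A : Matrix (Fin m) (Fin k) R) (N : Matrix (Fin k) (Fin n) R)
    (M : Matrix (Fin m) (Fin n) R) (hM : M = A * N) :
    (Finset.univ.gcd fun g : {g : Fin n → Fin k // StrictMono g} =>
        (N.submatrix g.1 id).det) ∣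
      (Finset.univ.gcd fun f : {f : Fin n → Fin m // StrictMono f} =>
        (M.submatrix f.1 id).det) := by
  apply Finset.dvd_gcd
  intro f _
  -- expand the submatrix determinant multilinearly in the rows
  have hrow : M.submatrix f.1 id = Matrix.of fun i => ∑ j, A (f.1 i) j • N j := by
    ext i l
    simp [hM, Matrix.mul_apply, Matrix.submatrix_apply]
  have hdet : (M.submatrix f.1 id).det
      = ∑ r : Fin n → Fin k, (∏ i, A (f.1 i) (r i)) • (N.submatrix r id).det := by
    rw [hrow]
    have h1 : (Matrix.of fun i => ∑ j, A (f.1 i) j • N j).det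
        = (Matrix.detRowAlternating : (Fin n → R) [⋀^Fin n]→ₗ[R] R)
            (fun i => ∑ j, A (f.1 i) j • N j) := rfl
    rw [h1]
    erw [(Matrix.detRowAlternating :
        (Fin n → R) [⋀^Fin n]→ₗ[R] R).toMultilinearMap.map_sum
        (g := fun i j => A (f.1 i) j • N j)]
    refine Finset.sum_congr rfl fun r _ => ?_
    have := (Matrix.detRowAlternating :
        (Fin n → R) [⋀^Fin n]→ₗ[R] R).toMultilinearMap.map_smul_univ
        (fun i => A (f.1 i) (r i)) (fun i => N (r i))
    simp at this ⊢
    exact this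
  rw [hdet]
  refine Finset.dvd_sum fun r _ => ?_
  rw [smul_eq_mul]
  exact (gcd_minors_dvd_det_submatrix N r).mul_left _
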